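/- Fix n ≥ 3. Let A = [a_{ij}] be an n×n random valuation matrix with entries in [0,1], with 2n preset entries indexed by S (contributing row-wise a max value 1 and min value 0), and with the remaining N = n(n−2) entries i.i.d. with mean μ and variance σ² > 0. Let λ = 1 + μ(n−2) − σ√(2(n−2)/n · ln n). Then P(SW_RP(A) ≤ λ) ≤ 1/(2n√(π ln n)) + C/(σ³√(n(n−2))), where C is the Berry–Esseen constant. -/

import Mathlib

open Finset MeasureTheory ProbabilityTheory

noncomputable def sdWelfare {n : ℕ} (A : Fin n → Fin n → ℝ) :
    List (Fin n) → Finset (Fin n) → ℝ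
  | [], _ => 0
  | i :: rest, R =>
    if h : R.Nonempty then
      A i (R.exists_mem_eq_sup' h (A i)).choose +
        sdWelfare A rest (R.erase (R.exists_mem_eq_sup' h (A i)).choose)
    else 0

noncomputable def swRP {n : ℕ} (A : Fin n → Fin n → ℝ) : ℝ :=
  (n.factorial : ℝ)⁻¹ *
    ∑ σ : Equiv.Perm (Fin n), sdWelfare A ((List.finRange n).map σ) Finset.univ

noncomputable def stdNormalCDF (x : ℝ) : ℝ :=
  ∫ t in Set.Iic x, (Real.sqrt (2 * Real.pi))⁻¹ * Real.exp (-t ^ 2 / 2)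

/-- `C` is a Berry–Esseen constant: the Berry–Esseen theorem for i.i.d.
[0,1]-valued random variables holds with constant `C`. -/
def IsBerryEsseenConstant (C : ℝ) : Prop :=
  0 < C ∧
    ∀ (Ω : Type) (_ : MeasureSpace Ω), IsProbabilityMeasure (ℙ : Measure Ω) →
    ∀ (N : ℕ), 0 < N →
    ∀ (X : Fin N → Ω → ℝ), (∀ k, Measurable (X k)) →
    (∀ k ω, X k ω ∈ Set.Icc (0 : ℝ) 1) →
    iIndepFun X ℙ →
    (∀ k l, IdentDistrib (X k) (X l) ℙ ℙ) →
    ∀ (μ σ : ℝ), 0 < σ →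
    (∀ k, (∫ ω, X k ω) = μ) → (∀ k, variance (X k) ℙ = σ ^ 2) →
    ∀ x : ℝ,
      |(ℙ {ω | (∑ k, (X k ω - μ)) / (σ * Real.sqrt N) ≤ x}).toReal -
          stdNormalCDF x| ≤ C / (σ ^ 3 * Real.sqrt N)

section Auxiliary

open Filter

variable {n : ℕ}

noncomputable def pickBest (A : Fin n → Fin n → ℝ) (i : Fin n) (R : Finset (Fin n)) : Fin n :=
  if h : R.Nonempty then (R.exists_mem_eq_sup' h (A i)).choose else i

lemma pickBest_mem {A : Fin n → Fin n → ℝ} {i : Fin n} {R : Finset (Fin n)} (h : R.Nonempty) :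
    pickBest A i R ∈ R := by
  rw [pickBest, dif_pos h]
  exact (R.exists_mem_eq_sup' h (A i)).choose_spec.1

lemma le_pickBest {A : Fin n → Fin n → ℝ} {i : Fin n} {R : Finset (Fin n)} (h : R.Nonempty)
    {j : Fin n} (hj : j ∈ R) : A i j ≤ A i (pickBest A i R) := by
  rw [pickBest, dif_pos h, ← (R.exists_mem_eq_sup' h (A i)).choose_spec.2]
  exact Finset.le_sup' _ hj

lemma sdWelfare_cons (A : Fin n → Fin n → ℝ) (i : Fin n) (L : List (Fin n))
    {R : Finset (Fin n)} (h : R.Nonempty) :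
    sdWelfare A (i :: L) R =
      A i (pickBest A i R) + sdWelfare A L (R.erase (pickBest A i R)) := by
  rw [sdWelfare, dif_pos h, pickBest, dif_pos h]

noncomputable def sumW (A : Fin n → Fin n → ℝ) : ℕ → Finset (Fin n) → Finset (Fin n) → ℝ
  | 0, _, _ => 0
  | (m+1), P, R => ∑ i ∈ P, ((m.factorial : ℝ) * A i (pickBest A i R)
      + sumW A m (P.erase i) (R.erase (pickBest A i R)))

def ordLists : ℕ → Finset (Fin n) → Finset (List (Fin n))
  | 0, _ => {[]}
  | (m+1), P => P.biUnion fun i => (ordLists m (P.erase i)).image (i :: ·)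

lemma mem_ordLists : ∀ (m : ℕ) (P : Finset (Fin n)), P.card = m →
    ∀ L : List (Fin n), (L ∈ ordLists m P ↔ L.Nodup ∧ L.toFinset = P) := by
  intro m
  induction m with
  | zero =>
    intro P hP L
    rw [Finset.card_eq_zero] at hP
    subst hP
    simp only [ordLists, Finset.mem_singleton]
    constructor
    · rintro rfl; simp
    · rintro ⟨h1, h2⟩
      cases L with
      | nil => rfl
      | cons a L' => simp at h2
  | succ m ih =>
    intro P hP L
    simp only [ordLists, Finset.mem_biUnion, Finset.mem_image]
    constructor
    · rintro ⟨i, hi, L', hL', rfl⟩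
      have hcard : (P.erase i).card = m := by rw [Finset.card_erase_of_mem hi, hP]; rfl
      obtain ⟨hnd, htf⟩ := (ih _ hcard L').mp hL'
      have hiL' : i ∉ L' := by
        intro h
        have : i ∈ P.erase i := htf ▸ List.mem_toFinset.mpr h
        exact (Finset.notMem_erase i P) this
      refine ⟨List.nodup_cons.mpr ⟨hiL', hnd⟩, ?_⟩
      rw [List.toFinset_cons, htf, Finset.insert_erase hi]
    · rintro ⟨hnd, htf⟩
      cases L with
      | nil =>
        exfalso
        simp [List.toFinset_nil] at htf
        rw [← htf] at hP; simp at hP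
      | cons i L' =>
        have hil' : i ∉ L' := (List.nodup_cons.mp hnd).1
        have hnd' : L'.Nodup := (List.nodup_cons.mp hnd).2
        have hiP : i ∈ P := by rw [← htf]; simp
        have htf' : L'.toFinset = P.erase i := by
          rw [← htf, List.toFinset_cons, Finset.erase_insert]
          simp [hil']
        have hcard : (P.erase i).card = m := by rw [Finset.card_erase_of_mem hiP, hP]; rfl
        exact ⟨i, hiP, L', (ih _ hcard L').mpr ⟨hnd', htf'⟩, rfl⟩

lemma pairwiseDisjoint_cons_image (s : Finset (Fin n)) (t : Fin n → Finset (List (Fin n))) :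
    (↑s : Set (Fin n)).PairwiseDisjoint fun i => (t i).image (i :: ·) := by
  intro i _ j _ hij
  simp only [Finset.disjoint_left, Finset.mem_image]
  rintro L ⟨L1, _, rfl⟩ ⟨L2, _, hL2⟩
  simp only [List.cons.injEq] at hL2
  exact hij hL2.1.symm

lemma card_ordLists : ∀ (m : ℕ) (P : Finset (Fin n)), P.card = m →
    (ordLists m P).card = m.factorial := by
  intro m
  induction m with
  | zero => intro P hP; simp [ordLists]
  | succ m ih =>
    intro P hP
    rw [ordLists, Finset.card_biUnion]
    · have : ∀ i ∈ P, ((ordLists m (P.erase i)).image (i :: ·)).card = m.factorial := by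
        intro i hi
        rw [Finset.card_image_of_injective _ (by intro a b h; injection h)]
        exact ih _ (by rw [Finset.card_erase_of_mem hi, hP]; rfl)
      rw [Finset.sum_congr rfl this, Finset.sum_const, hP]
      simp [Nat.factorial_succ, mul_comm]
    · intro i hi j hj hij
      exact pairwiseDisjoint_cons_image P (fun i => ordLists m (P.erase i)) hi hj hij

lemma sumW_eq (A : Fin n → Fin n → ℝ) : ∀ (m : ℕ) (P R : Finset (Fin n)), P.card = m →
    m ≤ R.card → sumW A m P R = ∑ L ∈ ordLists m P, sdWelfare A L R := by
  intro m
  induction m with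
  | zero => intro P R hP _; simp [sumW, ordLists, sdWelfare]
  | succ m ih =>
    intro P R hP hR
    have hRne : R.Nonempty := Finset.card_pos.mp (lt_of_lt_of_le (Nat.succ_pos m) hR)
    rw [ordLists, Finset.sum_biUnion (fun i hi j hj hij =>
      pairwiseDisjoint_cons_image P (fun i => ordLists m (P.erase i)) hi hj hij)]
    rw [sumW]
    refine Finset.sum_congr rfl fun i hi => ?_
    rw [Finset.sum_image (fun a _ b _ h => by injection h)]
    have hcard : (P.erase i).card = m := by rw [Finset.card_erase_of_mem hi, hP]; rfl
    have hRcard : m ≤ (R.erase (pickBest A i R)).card := by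
      rw [Finset.card_erase_of_mem (pickBest_mem hRne)]
      omega
    calc (m.factorial : ℝ) * A i (pickBest A i R) + sumW A m (P.erase i) (R.erase (pickBest A i R))
        = (m.factorial : ℝ) * A i (pickBest A i R)
          + ∑ L ∈ ordLists m (P.erase i), sdWelfare A L (R.erase (pickBest A i R)) := by
          rw [ih _ _ hcard hRcard]
      _ = ∑ L ∈ ordLists m (P.erase i), (A i (pickBest A i R)
            + sdWelfare A L (R.erase (pickBest A i R))) := by
          rw [Finset.sum_add_distrib, Finset.sum_const, card_ordLists m _ hcard]
          simp [mul_comm]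
      _ = ∑ L ∈ ordLists m (P.erase i), sdWelfare A (i :: L) R := by
          refine Finset.sum_congr rfl fun L _ => ?_
          rw [sdWelfare_cons A i L hRne]

lemma sumW_ge (A : Fin n → Fin n → ℝ) : ∀ (m : ℕ) (P R : Finset (Fin n)),
    P.card = m → R.card = m →
    (m.factorial : ℝ) * (∑ i ∈ P, ∑ j ∈ R, A i j) ≤ (m : ℝ) * sumW A m P R := by
  intro m
  induction m with
  | zero =>
    intro P R hP hR
    rw [Finset.card_eq_zero] at hP
    subst hP
    simp [sumW]
  | succ m ih =>
    intro P R hP hR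
    have hRne : R.Nonempty := Finset.card_pos.mp (by omega)
    set jp : Fin n → Fin n := fun i => pickBest A i R with hjp
    set Mv : Fin n → ℝ := fun i => A i (jp i) with hMv
    set T : ℝ := ∑ i ∈ P, ∑ j ∈ R, A i j with hT
    set SM : ℝ := ∑ i ∈ P, Mv i with hSM
    set F : ℝ := (m.factorial : ℝ) with hF
    have hFpos : (0:ℝ) < F := by positivity
    have hcol : ∀ i ∈ P, (∑ i' ∈ P, A i' (jp i)) ≤ SM := by
      intro i hi
      exact Finset.sum_le_sum fun i' _ => le_pickBest hRne (pickBest_mem hRne)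
    have hTi : ∀ i ∈ P, (∑ i' ∈ P.erase i, ∑ j ∈ R.erase (jp i), A i' j)
        = T - (∑ j ∈ R, A i j) - (∑ i' ∈ P, A i' (jp i)) + Mv i := by
      intro i hi
      have h1 : ∀ i' : Fin n, (∑ j ∈ R.erase (jp i), A i' j) = (∑ j ∈ R, A i' j) - A i' (jp i) := by
        intro i'
        rw [Finset.sum_erase_eq_sub (pickBest_mem hRne)]
      calc (∑ i' ∈ P.erase i, ∑ j ∈ R.erase (jp i), A i' j)
          = ∑ i' ∈ P.erase i, ((∑ j ∈ R, A i' j) - A i' (jp i)) := by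
            exact Finset.sum_congr rfl fun i' _ => h1 i'
        _ = (∑ i' ∈ P, ((∑ j ∈ R, A i' j) - A i' (jp i))) - ((∑ j ∈ R, A i j) - A i (jp i)) := by
            rw [Finset.sum_erase_eq_sub hi]
        _ = T - (∑ j ∈ R, A i j) - (∑ i' ∈ P, A i' (jp i)) + Mv i := by
            rw [Finset.sum_sub_distrib]
            ring
    rcases Nat.eq_zero_or_pos m with hm0 | hmpos
    · subst hm0
      obtain ⟨i, hPi⟩ := Finset.card_eq_one.mp hP
      obtain ⟨j, hRj⟩ := Finset.card_eq_one.mp hR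
      subst hPi; subst hRj
      have : A i j ≤ Mv i := le_pickBest hRne (Finset.mem_singleton_self j)
      simp only [sumW, Finset.sum_singleton]
      have h2 : A i j ≤ A i (pickBest A i ({j} : Finset (Fin n))) := this
      have hT' : T = A i j := by rw [hT]; simp
      rw [hT']
      norm_num
      linarith
    · have hmR : (0:ℝ) < m := by exact_mod_cast hmpos
      have hW : ∀ i ∈ P, F * (T - (∑ j ∈ R, A i j) - SM + Mv i)
          ≤ (m : ℝ) * sumW A m (P.erase i) (R.erase (jp i)) := by
        intro i hi
        have hcP : (P.erase i).card = m := by rw [Finset.card_erase_of_mem hi, hP]; rfl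
        have hcR : (R.erase (jp i)).card = m := by
          rw [Finset.card_erase_of_mem (pickBest_mem hRne), hR]
          rfl
        have := ih (P.erase i) (R.erase (jp i)) hcP hcR
        rw [hTi i hi] at this
        have hc := hcol i hi
        nlinarith [this, hc, hFpos]
      have hsum : F * ((m:ℝ) * (T - SM))
          ≤ (m:ℝ) * ∑ i ∈ P, sumW A m (P.erase i) (R.erase (jp i)) := by
        rw [Finset.mul_sum]
        calc F * ((m:ℝ) * (T - SM))
            = ∑ i ∈ P, F * (T - (∑ j ∈ R, A i j) - SM + Mv i) := by
              rw [← Finset.mul_sum]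
              have : ∑ i ∈ P, (T - (∑ j ∈ R, A i j) - SM + Mv i)
                  = (m+1 : ℝ) * T - T - (m+1 : ℝ) * SM + SM := by
                rw [Finset.sum_add_distrib, Finset.sum_sub_distrib, Finset.sum_sub_distrib,
                  Finset.sum_const, Finset.sum_const, hP, nsmul_eq_mul, nsmul_eq_mul,
                  ← hT, ← hSM]
                push_cast
                ring
              rw [this]; ring
          _ ≤ ∑ i ∈ P, (m:ℝ) * sumW A m (P.erase i) (R.erase (jp i)) :=
              Finset.sum_le_sum hW
      have hWsum : F * (T - SM) ≤ ∑ i ∈ P, sumW A m (P.erase i) (R.erase (jp i)) := by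
        nlinarith [hsum, hmR]
      rw [sumW]
      rw [Finset.sum_add_distrib, ← Finset.mul_sum, ← hSM]
      have hfact : ((m+1).factorial : ℝ) = (m+1 : ℝ) * F := by
        rw [hF, Nat.factorial_succ]; push_cast; ring
      push_cast
      rw [hfact]
      nlinarith [hWsum, hFpos]

lemma sum_perm_eq (f : List (Fin n) → ℝ) :
    ∑ σ : Equiv.Perm (Fin n), f ((List.finRange n).map σ) =
      ∑ L ∈ ordLists n (Finset.univ : Finset (Fin n)), f L := by
  have hcu : (Finset.univ : Finset (Fin n)).card = n := by simp
  refine Finset.sum_bij (fun σ _ => (List.finRange n).map σ) ?_ ?_ ?_ ?_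
  · intro σ _
    rw [mem_ordLists n _ hcu]
    constructor
    · exact (List.nodup_finRange n).map σ.injective
    · apply Finset.eq_univ_iff_forall.mpr
      intro x
      rw [List.mem_toFinset, List.mem_map]
      exact ⟨σ.symm x, List.mem_finRange _, σ.apply_symm_apply x⟩
  · intro σ _ τ _ h
    have h' : (List.finRange n).map σ = (List.finRange n).map τ := h
    apply Equiv.ext
    intro i
    exact List.map_inj_left.mp h' i (List.mem_finRange i)
  · intro L hL
    obtain ⟨hnd, htf⟩ := (mem_ordLists n _ hcu L).mp hL
    have hlen : L.length = n := by
      rw [← List.toFinset_card_of_nodup hnd, htf, hcu]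
    have hinj : Function.Injective (fun i : Fin n => L.get (Fin.cast hlen.symm i)) := by
      intro a b hab
      have := List.nodup_iff_injective_get.mp hnd hab
      simpa [Fin.ext_iff] using this
    have hbij := Finite.injective_iff_bijective.mp hinj
    refine ⟨Equiv.ofBijective _ hbij, Finset.mem_univ _, ?_⟩
    apply List.ext_get (by simp [hlen])
    intro k h1 h2
    simp [Equiv.ofBijective, List.get_finRange]
  · intro σ _; rfl

lemma swRP_ge (hn : 0 < n) (A : Fin n → Fin n → ℝ) :
    (∑ p : Fin n × Fin n, A p.1 p.2) / n ≤ swRP A := by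
  have hnR : (0:ℝ) < n := by exact_mod_cast hn
  have hfac : (0:ℝ) < (n.factorial : ℝ) := by positivity
  have h1 : ∑ σ : Equiv.Perm (Fin n), sdWelfare A ((List.finRange n).map σ) Finset.univ
      = sumW A n Finset.univ Finset.univ := by
    rw [sum_perm_eq (fun L => sdWelfare A L Finset.univ),
      sumW_eq A n Finset.univ Finset.univ (by simp) (by simp)]
  have h2 := sumW_ge A n Finset.univ Finset.univ (by simp) (by simp)
  have hps : ∑ p : Fin n × Fin n, A p.1 p.2 = ∑ i, ∑ j, A i j := by
    rw [Fintype.sum_prod_type]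
  rw [swRP, h1, hps, div_le_iff₀ hnR]
  rw [hps] at *
  set T : ℝ := ∑ i, ∑ j, A i j
  set W : ℝ := sumW A n Finset.univ Finset.univ
  have h3 : (n.factorial : ℝ)⁻¹ * ((n.factorial : ℝ) * T) ≤ (n.factorial : ℝ)⁻¹ * ((n:ℝ) * W) :=
    mul_le_mul_of_nonneg_left h2 (by positivity)
  rw [← mul_assoc, inv_mul_cancel₀ hfac.ne', one_mul] at h3
  calc T ≤ (n.factorial : ℝ)⁻¹ * ((n:ℝ) * W) := h3
    _ = (n.factorial : ℝ)⁻¹ * W * n := by ring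

lemma tendsto_gauss : Tendsto (fun t : ℝ => Real.exp (-t^2/2)) atBot (nhds 0) := by
  apply Real.tendsto_exp_atBot.comp
  apply Filter.Tendsto.atBot_div_const (by norm_num : (0:ℝ) < 2)
  apply Filter.tendsto_neg_atTop_atBot.comp
  have h1 : Tendsto (fun t : ℝ => |t|^2) atBot atTop :=
    (tendsto_pow_atTop (by norm_num)).comp tendsto_abs_atBot_atTop
  simpa [sq_abs] using h1

lemma integrable_gauss_deriv : Integrable (fun t : ℝ => Real.exp (-t^2/2) * (-t)) := by
  have h := (integrable_mul_exp_neg_mul_sq (by norm_num : (0:ℝ) < 1/2)).neg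
  have heq : (fun t : ℝ => Real.exp (-t^2/2) * (-t))
      = fun x : ℝ => -(x * Real.exp (-(1/2) * x^2)) := by
    funext x
    rw [show -(1/2) * x^2 = -x^2/2 by ring]
    ring
  rw [heq]
  exact h

lemma integral_gauss_deriv_Iic (s : ℝ) :
    ∫ t in Set.Iic (-s), Real.exp (-t^2/2) * (-t) = Real.exp (-s^2/2) := by
  have hderiv : ∀ t ∈ Set.Iic (-s), HasDerivAt (fun t : ℝ => Real.exp (-t^2/2))
      (Real.exp (-t^2/2) * (-t)) t := by
    intro t _
    have h1 : HasDerivAt (fun t : ℝ => -t^2/2) (-t) t := by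
      have := ((hasDerivAt_pow 2 t).div_const 2).neg
      refine (this.congr_deriv (by norm_num)).congr_of_eventuallyEq
        (Filter.Eventually.of_forall fun x => ?_)
      show -x^2/2 = -(x^2/2); ring
    exact h1.exp
  rw [integral_Iic_of_hasDerivAt_of_tendsto' hderiv integrable_gauss_deriv.integrableOn
    tendsto_gauss]
  rw [neg_pow, show ((-1:ℝ))^2 = 1 by norm_num]
  ring_nf

lemma stdNormalCDF_neg_le (s : ℝ) (hs : 0 < s) :
    stdNormalCDF (-s) ≤ Real.exp (-s^2/2) / (s * Real.sqrt (2*Real.pi)) := by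
  have hc : (0:ℝ) < Real.sqrt (2*Real.pi) := Real.sqrt_pos.mpr (by positivity)
  have hint1 : IntegrableOn (fun t : ℝ => (Real.sqrt (2 * Real.pi))⁻¹ * Real.exp (-t ^ 2 / 2))
      (Set.Iic (-s)) := by
    apply Integrable.integrableOn
    apply Integrable.const_mul
    have h := integrable_exp_neg_mul_sq (by norm_num : (0:ℝ) < 1/2)
    have heq : (fun t : ℝ => Real.exp (-t^2/2)) = fun x : ℝ => Real.exp (-(1/2) * x^2) := by
      funext x; rw [show -(1/2) * x^2 = -x^2/2 by ring]
    rw [heq]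
    exact h
  have hint2 : IntegrableOn
      (fun t : ℝ => ((Real.sqrt (2 * Real.pi))⁻¹ / s) * (Real.exp (-t ^ 2 / 2) * (-t)))
      (Set.Iic (-s)) :=
    (integrable_gauss_deriv.const_mul _).integrableOn
  have hmono : stdNormalCDF (-s) ≤
      ∫ t in Set.Iic (-s), ((Real.sqrt (2 * Real.pi))⁻¹ / s) * (Real.exp (-t ^ 2 / 2) * (-t)) := by
    rw [stdNormalCDF]
    apply MeasureTheory.setIntegral_mono_on hint1 hint2 measurableSet_Iic
    intro t ht
    simp only [Set.mem_Iic] at ht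
    have h1 : s ≤ -t := by linarith
    have h2 : (0:ℝ) < Real.exp (-t^2/2) := Real.exp_pos _
    have hcinv : (0:ℝ) ≤ (Real.sqrt (2*Real.pi))⁻¹ := by positivity
    rw [div_mul_eq_mul_div, le_div_iff₀ hs]
    nlinarith [mul_le_mul_of_nonneg_left h1 (mul_nonneg hcinv h2.le)]
  calc stdNormalCDF (-s) ≤ _ := hmono
    _ = ((Real.sqrt (2*Real.pi))⁻¹ / s) * Real.exp (-s^2/2) := by
        rw [MeasureTheory.integral_const_mul, integral_gauss_deriv_Iic]
    _ = Real.exp (-s^2/2) / (s * Real.sqrt (2*Real.pi)) := by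
        field_simp

lemma iIndepFun_reindex {Ω ι κ : Type*} [MeasurableSpace Ω] {μ : Measure Ω}
    (e : κ ≃ ι) (f : ι → Ω → ℝ)
    (h : iIndepFun f μ) :
    iIndepFun (fun k => f (e k)) μ := by
  classical
  rw [ProbabilityTheory.iIndepFun_iff_measure_inter_preimage_eq_mul] at h ⊢
  intro S sets hsets
  have key := h (S.image e) (sets := fun i => sets (e.symm i))
    (by intro i hi
        obtain ⟨k, hk, rfl⟩ := Finset.mem_image.mp hi
        simpa using hsets k hk)
  rw [Finset.set_biInter_finset_image, Finset.prod_image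
    (fun a _ b _ hab => e.injective hab)] at key
  simpa using key

end Auxiliary

set_option maxHeartbeats 2000000 in
theorem prob_swRP_le_lambda_iid
    {Ω : Type} [MeasureSpace Ω] [IsProbabilityMeasure (ℙ : Measure Ω)]
    (n : ℕ) (hn : 3 ≤ n) (A : Ω → Fin n → Fin n → ℝ)
    (hmeas : ∀ i j, Measurable (fun ω => A ω i j))
    (hrange : ∀ ω i j, A ω i j ∈ Set.Icc (0 : ℝ) 1)
    (S : Finset (Fin n × Fin n)) (hcard : S.card = 2 * n)
    (hpreset : ∀ p ∈ S, ∃ c : ℝ, ∀ ω, A ω p.1 p.2 = c)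
    (hpresetSum : ∀ ω, (∑ p ∈ S, A ω p.1 p.2) = n)
    (hindep : iIndepFun
      (fun (p : {q : Fin n × Fin n // q ∉ S}) ω => A ω p.1.1 p.1.2) ℙ)
    (hident : ∀ p q : {q : Fin n × Fin n // q ∉ S},
      IdentDistrib (fun ω => A ω p.1.1 p.1.2) (fun ω => A ω q.1.1 q.1.2) ℙ ℙ)
    (μ σ : ℝ) (hσ : 0 < σ)
    (hmean : ∀ p : {q : Fin n × Fin n // q ∉ S}, (∫ ω, A ω p.1.1 p.1.2) = μ)
    (hvar : ∀ p : {q : Fin n × Fin n // q ∉ S},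
      variance (fun ω => A ω p.1.1 p.1.2) ℙ = σ ^ 2)
    (C : ℝ) (hC : IsBerryEsseenConstant C)
    (lam : ℝ)
    (hlam : lam = 1 + μ * (n - 2) -
      σ * Real.sqrt (2 * ((n : ℝ) - 2) / n * Real.log n)) :
    (ℙ {ω | swRP (A ω) ≤ lam}).toReal ≤
      1 / (2 * n * Real.sqrt (Real.pi * Real.log n)) +
        C / (σ ^ 3 * Real.sqrt ((n : ℝ) * ((n : ℝ) - 2))) := by
  classical
  have hn0 : 0 < n := by omega
  have hnR : (0:ℝ) < n := by exact_mod_cast hn0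
  set N : ℕ := n * (n - 2) with hNdef
  have hNpos : 0 < N := Nat.mul_pos hn0 (by omega)
  have hNcast : (N : ℝ) = (n:ℝ) * ((n:ℝ) - 2) := by
    rw [hNdef, Nat.cast_mul, Nat.cast_sub (by omega : 2 ≤ n)]
    norm_num
  have hNR : (0:ℝ) < (N:ℝ) := by exact_mod_cast hNpos
  have hcardsub : Fintype.card {q : Fin n × Fin n // q ∉ S} = N := by
    have hms : n * (n-2) = n*n - 2*n := by rw [Nat.mul_sub, Nat.mul_comm n 2]
    rw [Fintype.card_subtype_compl, Fintype.card_coe, hcard, Fintype.card_prod,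
      Fintype.card_fin, hNdef, hms]
  set e : Fin N ≃ {q : Fin n × Fin n // q ∉ S} := (Fintype.equivFinOfCardEq hcardsub).symm
    with he
  set X : Fin N → Ω → ℝ := fun k ω => A ω (e k).1.1 (e k).1.2 with hX
  set s0 : ℝ := Real.sqrt (2 * Real.log n) with hs0
  have hlogpos : 0 < Real.log n := Real.log_pos (by exact_mod_cast (by omega : 1 < n))
  have hs0pos : 0 < s0 := Real.sqrt_pos.mpr (by positivity)
  have hXmeas : ∀ k, Measurable (X k) := fun k => hmeas _ _
  have hXrange : ∀ k ω, X k ω ∈ Set.Icc (0:ℝ) 1 := fun k ω => hrange ω _ _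
  have hXindep : iIndepFun X ℙ := iIndepFun_reindex e _ hindep
  have hXident : ∀ k l, IdentDistrib (X k) (X l) ℙ ℙ := fun k l => hident (e k) (e l)
  have hXmean : ∀ k, (∫ ω, X k ω) = μ := fun k => hmean (e k)
  have hXvar : ∀ k, variance (X k) ℙ = σ^2 := fun k => hvar (e k)
  have hBE0 := hC.2 Ω ‹MeasureSpace Ω› ‹IsProbabilityMeasure (ℙ : Measure Ω)› N hNpos X
    hXmeas hXrange
  have hBE1 := hBE0 hXindep
  have hBE := hBE1 hXident μ σ hσ hXmean hXvar (-s0)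
  -- deterministic lower bound on swRP
  have hdet : ∀ ω, 1 + (∑ k, X k ω) / n ≤ swRP (A ω) := by
    intro ω
    have h1 := swRP_ge hn0 (A ω)
    have hcompl : ∑ k, X k ω = ∑ p ∈ Sᶜ, A ω p.1 p.2 := by
      have he1 : ∑ k, X k ω = ∑ p : {q : Fin n × Fin n // q ∉ S}, A ω p.1.1 p.1.2 :=
        Equiv.sum_comp e (fun p : {q : Fin n × Fin n // q ∉ S} => A ω p.1.1 p.1.2)
      rw [he1, Finset.sum_subtype Sᶜ (fun x => Finset.mem_compl) (fun p => A ω p.1 p.2)]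
    have h2 : ∑ p : Fin n × Fin n, A ω p.1 p.2 = (n:ℝ) + ∑ k, X k ω := by
      rw [← Finset.sum_add_sum_compl S (fun p => A ω p.1 p.2), hpresetSum ω, ← hcompl]
    rw [h2, add_div, div_self hnR.ne'] at h1
    exact h1
  -- event inclusion
  have hincl : {ω | swRP (A ω) ≤ lam} ⊆
      {ω | (∑ k, (X k ω - μ)) / (σ * Real.sqrt N) ≤ -s0} := by
    intro ω hω
    simp only [Set.mem_setOf_eq] at hω ⊢
    have hd := hdet ω
    set rq : ℝ := Real.sqrt (2 * ((n:ℝ)-2)/n * Real.log n) with hrq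
    have hq : (n:ℝ) * rq = Real.sqrt (N:ℝ) * s0 := by
      calc (n:ℝ) * rq
          = Real.sqrt ((n:ℝ)^2) * rq := by rw [Real.sqrt_sq hnR.le]
        _ = Real.sqrt ((n:ℝ)^2 * (2 * ((n:ℝ)-2)/n * Real.log n)) := by
            rw [hrq, ← Real.sqrt_mul (by positivity)]
        _ = Real.sqrt ((N:ℝ) * (2 * Real.log n)) := by
            congr 1
            rw [hNcast]
            field_simp
        _ = Real.sqrt (N:ℝ) * s0 := by rw [Real.sqrt_mul hNR.le, hs0]
    have hsum : ∑ k, (X k ω - μ) = (∑ k, X k ω) - (N:ℝ) * μ := by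
      rw [Finset.sum_sub_distrib, Finset.sum_const, Finset.card_univ, Fintype.card_fin,
        nsmul_eq_mul]
    have hσN : (0:ℝ) < σ * Real.sqrt (N:ℝ) :=
      mul_pos hσ (Real.sqrt_pos.mpr hNR)
    rw [div_le_iff₀ hσN, hsum]
    have h5 : 1 + (∑ k, X k ω)/n ≤ 1 + μ * ((n:ℝ) - 2) - σ * rq := by
      rw [hrq]
      exact le_of_le_of_eq (hd.trans hω) hlam
    have h5' : (∑ k, X k ω)/n ≤ μ * ((n:ℝ)-2) - σ * rq := by linarith
    have h6 : ∑ k, X k ω ≤ (n:ℝ) * (μ * ((n:ℝ)-2) - σ * rq) := by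
      rw [div_le_iff₀ hnR] at h5'
      linarith [h5']
    calc (∑ k, X k ω) - (N:ℝ)*μ
        ≤ (n:ℝ)*(μ*((n:ℝ)-2) - σ*rq) - (N:ℝ)*μ := by linarith
      _ = -(σ * ((n:ℝ)*rq)) := by rw [hNcast]; ring
      _ = -(σ * (Real.sqrt (N:ℝ) * s0)) := by rw [hq]
      _ = (-s0) * (σ * Real.sqrt (N:ℝ)) := by ring
  -- combine
  have hP1 : (ℙ {ω | swRP (A ω) ≤ lam}).toReal ≤
      (ℙ {ω | (∑ k, (X k ω - μ)) / (σ * Real.sqrt N) ≤ -s0}).toReal :=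
    ENNReal.toReal_mono (measure_ne_top _ _) (measure_mono hincl)
  have hP2 : (ℙ {ω | (∑ k, (X k ω - μ)) / (σ * Real.sqrt N) ≤ -s0}).toReal ≤
      stdNormalCDF (-s0) + C / (σ^3 * Real.sqrt N) := by
    have := abs_le.mp hBE
    linarith [this.2]
  have hsqpos : 0 < Real.sqrt (Real.pi * Real.log n) :=
    Real.sqrt_pos.mpr (by positivity)
  have hPhi : stdNormalCDF (-s0) ≤ 1 / (2 * n * Real.sqrt (Real.pi * Real.log n)) := by
    have h8 := stdNormalCDF_neg_le s0 hs0pos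
    have h9 : s0^2 = 2 * Real.log n := Real.sq_sqrt (by positivity)
    have h10 : Real.exp (-s0^2/2) = ((n:ℝ))⁻¹ := by
      rw [h9, show -(2*Real.log n)/2 = -Real.log n by ring, Real.exp_neg, Real.exp_log hnR]
    have h11 : s0 * Real.sqrt (2*Real.pi) = 2 * Real.sqrt (Real.pi * Real.log n) := by
      rw [hs0, ← Real.sqrt_mul (by positivity),
        show 2*Real.log n * (2*Real.pi) = 4 * (Real.pi * Real.log n) by ring,
        Real.sqrt_mul (by norm_num : (0:ℝ) ≤ 4),
        show Real.sqrt 4 = 2 by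
          rw [show (4:ℝ) = 2^2 by norm_num, Real.sqrt_sq (by norm_num : (0:ℝ) ≤ 2)]]
    calc stdNormalCDF (-s0) ≤ Real.exp (-s0^2/2) / (s0 * Real.sqrt (2*Real.pi)) := h8
      _ = (n:ℝ)⁻¹ / (2 * Real.sqrt (Real.pi * Real.log n)) := by rw [h10, h11]
      _ = 1 / (2 * n * Real.sqrt (Real.pi * Real.log n)) := by
          field_simp
  have hfin : C / (σ^3 * Real.sqrt (N:ℝ)) = C / (σ^3 * Real.sqrt ((n:ℝ)*((n:ℝ)-2))) := by
    rw [hNcast]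
  linarith [hP1, hP2, hPhi, hfin.le, hfin.ge]
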